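/- Let G be a group, M a monoid, and f : G →* M a monoid homomorphism. Let r_f be the relation on M × M generated by r_f (m * f g, m') (m, f g * m') for all g ∈ G and m, m' ∈ M, with ≈_f := Relation.EqvGen r_f. Then the map (M × M)/≈_f → M induced by multiplication (x, y) ↦ x * y is bijective (i.e. f is Cauchy dense) if and only if f is surjective; moreover, if f is surjective then every element of M is a unit (M is a group). -/
import Mathlib


/-- The relation `r_f` on `M × M` generated by a monoid homomorphism `f : G →* M`:
`(m * f g, m') ∼ (m, f g * m')` for all `g ∈ G` and `m, m' ∈ M`. -/
def cauchyRel {G M : Type*} [Monoid G] [Monoid M] (f : G →* M) :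
    M × M → M × M → Prop :=
  fun p q => ∃ (g : G) (m m' : M), p = (m * f g, m') ∧ q = (m, f g * m')

/-- The map `(M × M)/≈_f → M` induced by multiplication. -/
def cauchyMul {G M : Type*} [Monoid G] [Monoid M] (f : G →* M) :
    Quot (cauchyRel f) → M :=
  Quot.lift (fun p => p.1 * p.2) (by
    rintro _ _ ⟨g, m, m', rfl, rfl⟩
    simp [mul_assoc])

/-- A monoid homomorphism `f : G →* M` out of a group `G` is Cauchy dense iff it is
surjective; moreover, if it is surjective then every element of `M` is a unit. -/
theorem group_monoidHom_cauchyDense_iff_surjective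
    {G M : Type*} [Group G] [Monoid M] (f : G →* M) :
    (Function.Bijective (cauchyMul f) ↔ Function.Surjective f) ∧
      (Function.Surjective f → ∀ m : M, IsUnit m) := by
  have key : ∀ (a : M) (g : G), (∃ h, a * f g = f h) ↔ (∃ h, a = f h) := by
    intro a g
    constructor
    · rintro ⟨h, hh⟩
      refine ⟨h * g⁻¹, ?_⟩
      rw [map_mul, ← hh, mul_assoc, ← map_mul, mul_inv_cancel, map_one, mul_one]
    · rintro ⟨h, rfl⟩
      exact ⟨h * g, by rw [map_mul]⟩
  have hP : ∀ p q, cauchyRel f p q → (∃ h : G, p.1 = f h) = (∃ h : G, q.1 = f h) := by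
    rintro _ _ ⟨g, m, m', rfl, rfl⟩
    exact propext (key m g)
  constructor
  · constructor
    · -- bijective → surjective
      intro hb m
      have h1 : cauchyMul f (Quot.mk _ (m, 1)) = cauchyMul f (Quot.mk _ (1, m)) := by
        simp [cauchyMul]
      have h2 := congrArg (Quot.lift (fun p : M × M => ∃ h : G, p.1 = f h) hP) (hb.1 h1)
      simp only [Quot.lift_mk] at h2
      have : ∃ h : G, m = f h := h2 ▸ ⟨1, (map_one f).symm⟩
      obtain ⟨h, rfl⟩ := this
      exact ⟨h, rfl⟩
    · -- surjective → bijective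
      intro hs
      constructor
      · intro x y
        induction x using Quot.ind with | _ p => ?_
        induction y using Quot.ind with | _ q => ?_
        intro hpq
        obtain ⟨a, b⟩ := p
        obtain ⟨c, d⟩ := q
        have hab : a * b = c * d := hpq
        obtain ⟨g, rfl⟩ := hs b
        obtain ⟨g', rfl⟩ := hs d
        have r1 : cauchyRel f (a * f g, 1) (a, f g * 1) := ⟨g, a, 1, rfl, rfl⟩
        have r2 : cauchyRel f (c * f g', 1) (c, f g' * 1) := ⟨g', c, 1, rfl, rfl⟩
        rw [mul_one] at r1 r2
        have e1 := Quot.sound r1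
        have e2 := Quot.sound r2
        rw [← e1, ← e2, hab]
      · intro m
        exact ⟨Quot.mk _ (m, 1), mul_one m⟩
  · intro hs m
    obtain ⟨g, rfl⟩ := hs m
    exact ⟨⟨f g, f g⁻¹, by rw [← map_mul, mul_inv_cancel, map_one],
      by rw [← map_mul, inv_mul_cancel, map_one]⟩, rfl⟩
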